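/- Let n ≥ 1, μ > 0, and let Φ be a map from symmetric n×n real matrices to symmetric n×n real matrices with the spectral property: for every symmetric M, every orthogonal P, and every d ∈ ℝ^n with M = P·Diag(d)·Pᵀ, one has Φ(M) = P·Diag(φ_μ(d₁),…,φ_μ(d_n))·Pᵀ (such a Φ is well defined and unique). Fix a symmetric X with orthogonal eigendecomposition X = P·Diag(d)·Pᵀ, and define Ω ∈ S^n by Ω_{ij} = (φ_μ(d_i) + φ_μ(d_j))/(√(d_i² + 4μ) + √(d_j² + 4μ)). Then Φ is Fréchet differentiable at X within the subspace of symmetric matrices, with derivative given by the linear map H ↦ P(Ω ∘ (PᵀHP))Pᵀ for symmetric H, where ∘ denotes the Hadamard (entrywise) product: i.e., ‖Φ(X + H) − Φ(X) − P(Ω ∘ (PᵀHP))Pᵀ‖_F / ‖H‖_F → 0 as symmetric H → 0. -/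

import Mathlib

open Matrix

/-- The scalar function `φ_μ(t) = (√(t² + 4μ) + t)/2`. -/
noncomputable def phiMu (μ t : ℝ) : ℝ := (Real.sqrt (t ^ 2 + 4 * μ) + t) / 2

/-- The Frobenius norm `‖M‖_F = √(Σ_{ij} M_{ij}²)`. -/
noncomputable def frob {n : ℕ} (M : Matrix (Fin n) (Fin n) ℝ) : ℝ :=
  Real.sqrt (∑ i : Fin n, ∑ j : Fin n, (M i j) ^ 2)

/-
Conjugating by `P` turns `X`, `Φ X`, `H`, `Φ (X + H) - Φ X` into `D = Diag d`,
`Λ = Diag (φ_μ ∘ d)`, `G` and `F`. As `φ_μ(t)` solves `λ² - tλ = μ`, we have `Λ² - DΛ = μ` and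
`B² - AB = μ` for `A = D + G`, `B = Λ + F`, which commute. Symmetrising and subtracting gives the
Sylvester equation `(sᵢ + sⱼ) Fᵢⱼ = (φ_μ(dᵢ) + φ_μ(dⱼ)) Gᵢⱼ + Nᵢⱼ` with
`sᵢ = 2φ_μ(dᵢ) - dᵢ = √(dᵢ² + 4μ)` and `N = GF + FG - 2F²`, so `F - Ω ∘ G = N / (sᵢ + sⱼ)`
entrywise. Since `sᵢ ≥ 2√μ` and `‖F‖_F ≤ ‖G‖_F` (`φ_μ` is 1-Lipschitz), the remainder is at most
`‖H‖_F² / √μ`.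
-/

attribute [local instance] Matrix.frobeniusSeminormedAddCommGroup
  Matrix.frobeniusNormedAddCommGroup Matrix.frobeniusNormedSpace

theorem abs_sqrt_sq_add_sub_sqrt_sq_add_le {c : ℝ} (hc : 0 ≤ c) (a b : ℝ) :
    |√(a ^ 2 + c) - √(b ^ 2 + c)| ≤ |a - b| := by
  have ha : √(a ^ 2 + c) ^ 2 = a ^ 2 + c := Real.sq_sqrt (by positivity)
  have hb : √(b ^ 2 + c) ^ 2 = b ^ 2 + c := Real.sq_sqrt (by positivity)
  -- `(ab + c)² ≤ (a² + c)(b² + c)` is Cauchy–Schwarz for `(a, √c)` and `(b, √c)`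
  have hcs : a * b + c ≤ √(a ^ 2 + c) * √(b ^ 2 + c) := by
    rw [← Real.sqrt_mul (by positivity)]
    exact (le_abs_self _).trans (Real.abs_le_sqrt (by nlinarith [sq_nonneg (a - b)]))
  refine sq_le_sq.mp ?_
  nlinarith

theorem sqrt_sq_add_eq_two_mul_phiMu_sub (μ t : ℝ) : √(t ^ 2 + 4 * μ) = 2 * phiMu μ t - t := by
  unfold phiMu; ring

theorem phiMu_mul_self_sub {μ : ℝ} (hμ : 0 ≤ μ) (t : ℝ) :
    phiMu μ t * phiMu μ t - t * phiMu μ t = μ := by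
  have h : √(t ^ 2 + 4 * μ) ^ 2 = t ^ 2 + 4 * μ := Real.sq_sqrt (by positivity)
  unfold phiMu
  linear_combination h / 4

theorem lipschitzWith_phiMu {μ : ℝ} (hμ : 0 ≤ μ) : LipschitzWith 1 (phiMu μ) := by
  refine LipschitzWith.of_dist_le_mul fun a b => ?_
  simp only [NNReal.coe_one, one_mul, Real.dist_eq, phiMu]
  have := abs_sqrt_sq_add_sub_sqrt_sq_add_le (c := 4 * μ) (by positivity) a b
  calc |(√(a ^ 2 + 4 * μ) + a) / 2 - (√(b ^ 2 + 4 * μ) + b) / 2|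
      = |(√(a ^ 2 + 4 * μ) - √(b ^ 2 + 4 * μ)) + (a - b)| / 2 := by
        rw [← abs_two, ← abs_div, abs_two]; ring_nf
    _ ≤ |a - b| := by linarith [abs_add_le (√(a ^ 2 + 4 * μ) - √(b ^ 2 + 4 * μ)) (a - b)]

theorem sylvester_of_sq_sub_mul_eq {A : Type*} [Ring A] {Λ D F G c : A}
    (hq : (Λ + F) * (Λ + F) - (D + G) * (Λ + F) = c)
    (hc : Commute (D + G) (Λ + F)) (hΛ : Λ * Λ - D * Λ = c) (hD : Commute D Λ) :
    2 • (Λ * F + F * Λ) - D * F - F * D - Λ * G - G * Λ = G * F + F * G - 2 • (F * F) := by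
  rw [← sub_eq_zero]
  calc _ = ((Λ + F) * (Λ + F) - (D + G) * (Λ + F) - c)
        + ((Λ + F) * (Λ + F) - (Λ + F) * (D + G) - c)
        - 2 • (Λ * Λ - D * Λ - c) - (D * Λ - Λ * D) := by noncomm_ring
    _ = 0 := by rw [hq, ← hc.eq, hq, hΛ, hD.eq]; simp

namespace Matrix

section Frobenius

variable {l m n α β 𝕜 : Type*} [Fintype l] [Fintype m] [Fintype n]

theorem frobenius_norm_sq [SeminormedAddCommGroup α] (A : Matrix m n α) :
    ‖A‖ ^ 2 = ∑ i, ∑ j, ‖A i j‖ ^ 2 := by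
  rw [frobenius_norm_def, ← Real.sqrt_eq_rpow, Real.sq_sqrt (by positivity)]
  simp_rw [Real.rpow_two]

theorem frobenius_norm_le_of_forall_norm_le [SeminormedAddCommGroup α] [SeminormedAddCommGroup β]
    {A : Matrix m n α} {B : Matrix m n β} (h : ∀ i j, ‖A i j‖ ≤ ‖B i j‖) : ‖A‖ ≤ ‖B‖ := by
  refine (pow_le_pow_iff_left₀ (norm_nonneg A) (norm_nonneg B) two_ne_zero).mp ?_
  rw [frobenius_norm_sq, frobenius_norm_sq]
  gcongr with i _ j _
  exact h i j

theorem ofReal_frobenius_norm_sq_eq_trace [RCLike 𝕜] (A : Matrix m n 𝕜) :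
    ((‖A‖ ^ 2 : ℝ) : 𝕜) = trace (Aᴴ * A) := by
  rw [frobenius_norm_sq, trace, Finset.sum_comm]
  push_cast
  refine Finset.sum_congr rfl fun j _ => ?_
  simp [mul_apply, RCLike.conj_mul]

theorem frobenius_norm_mul_of_conjTranspose_mul_self [RCLike 𝕜] [DecidableEq m] {U : Matrix l m 𝕜}
    (hU : Uᴴ * U = 1) (A : Matrix m n 𝕜) : ‖U * A‖ = ‖A‖ := by
  refine (pow_left_inj₀ (norm_nonneg _) (norm_nonneg _) two_ne_zero).mp
    (RCLike.ofReal_injective (K := 𝕜) ?_)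
  simp only [ofReal_frobenius_norm_sq_eq_trace, conjTranspose_mul, Matrix.mul_assoc]
  rw [← Matrix.mul_assoc Uᴴ, hU, Matrix.one_mul]

theorem frobenius_norm_mul_of_mul_conjTranspose_self [RCLike 𝕜] [DecidableEq n] {V : Matrix n l 𝕜}
    (hV : V * Vᴴ = 1) (A : Matrix m n 𝕜) : ‖A * V‖ = ‖A‖ := by
  rw [← frobenius_norm_conjTranspose, conjTranspose_mul,
    frobenius_norm_mul_of_conjTranspose_mul_self (by rwa [conjTranspose_conjTranspose]),
    frobenius_norm_conjTranspose]

end Frobenius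

variable {n R : Type*} [Fintype n] [DecidableEq n]

section Diagonal

variable [CommSemiring R] {Q : Matrix n n R}

theorem conj_diagonal_mul_conj_diagonal (hQ : Qᵀ * Q = 1) (a b : n → R) :
    Q * diagonal a * Qᵀ * (Q * diagonal b * Qᵀ) = Q * diagonal (fun i => a i * b i) * Qᵀ := by
  simp only [Matrix.mul_assoc]
  rw [← Matrix.mul_assoc Qᵀ, hQ, Matrix.one_mul, ← Matrix.mul_assoc (diagonal a),
    diagonal_mul_diagonal']

theorem commute_conj_diagonal (hQ : Qᵀ * Q = 1) (a b : n → R) :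
    Commute (Q * diagonal a * Qᵀ) (Q * diagonal b * Qᵀ) := by
  simp only [Commute, SemiconjBy, conj_diagonal_mul_conj_diagonal hQ, mul_comm]

theorem conj_diagonal_const (hQ : Qᵀ * Q = 1) (c : R) :
    Q * diagonal (fun _ => c) * Qᵀ = c • 1 := by
  rw [← smul_one_eq_diagonal, Matrix.mul_smul, Matrix.smul_mul, Matrix.mul_one,
    mul_eq_one_comm.mp hQ]

end Diagonal

theorem quadratic_perturbation_apply [CommRing R] {μ : R} {d l : n → R}
    (hl : ∀ i, l i * l i - d i * l i = μ) {F G : Matrix n n R}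
    (hq : (diagonal l + F) * (diagonal l + F) - (diagonal d + G) * (diagonal l + F) = μ • 1)
    (hc : Commute (diagonal d + G) (diagonal l + F)) (i j : n) :
    (2 * l i - d i + (2 * l j - d j)) * F i j
      = (l i + l j) * G i j + (G * F + F * G - 2 • (F * F)) i j := by
  have hl' : diagonal l * diagonal l - diagonal d * diagonal l = μ • 1 := by
    rw [diagonal_mul_diagonal', diagonal_mul_diagonal', diagonal_sub, smul_one_eq_diagonal]
    exact congrArg diagonal (funext hl)
  have hdl : Commute (diagonal d) (diagonal l) := by
    simp only [Commute, SemiconjBy, diagonal_mul_diagonal', mul_comm]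
  have hij := congrFun₂ (sylvester_of_sq_sub_mul_eq (A := Matrix n n R) hq hc hl' hdl) i j
  simp only [sub_apply, add_apply, smul_apply, diagonal_mul, mul_diagonal] at hij ⊢
  simp only [nsmul_eq_mul, Nat.cast_ofNat] at hij ⊢
  linear_combination hij

theorem exists_orthogonal_diagonal_of_isSymm {A : Matrix n n ℝ} (hA : A.IsSymm) :
    ∃ (Q : Matrix n n ℝ) (e : n → ℝ), Qᵀ * Q = 1 ∧ A = Q * diagonal e * Qᵀ := by
  have hH : A.IsHermitian := isHermitian_iff_isSymm.mpr hA
  refine ⟨hH.eigenvectorUnitary, hH.eigenvalues, ?_, ?_⟩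
  · simpa [star_eq_conjTranspose] using Unitary.coe_star_mul_self hH.eigenvectorUnitary
  · simpa [star_eq_conjTranspose, Unitary.conjStarAlgAut_apply] using hH.spectral_theorem

theorem frobenius_norm_conj_of_transpose_mul_self {P : Matrix n n ℝ} (hP : Pᵀ * P = 1)
    (M : Matrix n n ℝ) : ‖P * M * Pᵀ‖ = ‖M‖ := by
  rw [← conjTranspose_eq_transpose_of_trivial] at hP ⊢
  rw [frobenius_norm_mul_of_mul_conjTranspose_self (by rwa [conjTranspose_conjTranspose]),
    frobenius_norm_mul_of_conjTranspose_mul_self hP]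

theorem transpose_mul_conj_diagonal_sub_conj_diagonal_mul {P Q : Matrix n n ℝ} (hP : Pᵀ * P = 1)
    (a b : n → ℝ) :
    Pᵀ * (Q * diagonal a * Qᵀ - P * diagonal b * Pᵀ) * P
      = Pᵀ * Q * diagonal a * (Pᵀ * Q)ᵀ - diagonal b := by
  simp only [Matrix.mul_sub, Matrix.sub_mul, transpose_mul, transpose_transpose, Matrix.mul_assoc]
  rw [← Matrix.mul_assoc Pᵀ P, hP, Matrix.one_mul, Matrix.mul_one]

end Matrix

variable {n : Type*} [Fintype n] [DecidableEq n]

-- Right multiplication by `Q` is an isometry and turns the difference into the matrix with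
-- entries `(f (a j) - f (b i)) * Q i j`.
theorem LipschitzWith.norm_conj_diagonal_sub_diagonal_le {f : ℝ → ℝ} {K : NNReal}
    (hf : LipschitzWith K f) {Q : Matrix n n ℝ} (hQ : Qᵀ * Q = 1) (a b : n → ℝ) :
    ‖Q * diagonal (fun i => f (a i)) * Qᵀ - diagonal (fun i => f (b i))‖
      ≤ K * ‖Q * diagonal a * Qᵀ - diagonal b‖ := by
  have hQ' : Q * Qᴴ = 1 := by
    rw [conjTranspose_eq_transpose_of_trivial]; exact mul_eq_one_comm.mp hQ
  have hmul : ∀ c : n → ℝ, ∀ g : n → ℝ,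
      (Q * diagonal c * Qᵀ - diagonal g) * Q = Q * diagonal c - diagonal g * Q := by
    intro c g
    rw [Matrix.sub_mul, Matrix.mul_assoc, hQ, Matrix.mul_one]
  rw [← frobenius_norm_mul_of_mul_conjTranspose_self hQ',
    ← frobenius_norm_mul_of_mul_conjTranspose_self hQ' (Q * diagonal a * Qᵀ - diagonal b),
    hmul, hmul, ← NNReal.abs_eq K, ← Real.norm_eq_abs, ← norm_smul]
  refine frobenius_norm_le_of_forall_norm_le fun i j => ?_
  simp only [Matrix.sub_apply, Matrix.smul_apply, mul_diagonal, diagonal_mul, smul_eq_mul,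
    Real.norm_eq_abs]
  rw [show Q i j * f (a j) - f (b i) * Q i j = (f (a j) - f (b i)) * Q i j by ring,
    show Q i j * a j - b i * Q i j = (a j - b i) * Q i j by ring, abs_mul, abs_mul, abs_mul,
    NNReal.abs_eq, ← mul_assoc, ← Real.dist_eq, ← Real.dist_eq]
  gcongr
  exact hf.dist_le_mul _ _

theorem conj_diagonal_phiMu_quadratic {μ : ℝ} (hμ : 0 ≤ μ) {Q : Matrix n n ℝ}
    (hQ : Qᵀ * Q = 1) (e : n → ℝ) :
    Q * diagonal (fun i => phiMu μ (e i)) * Qᵀ * (Q * diagonal (fun i => phiMu μ (e i)) * Qᵀ)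
      - Q * diagonal e * Qᵀ * (Q * diagonal (fun i => phiMu μ (e i)) * Qᵀ) = μ • 1 := by
  rw [conj_diagonal_mul_conj_diagonal hQ, conj_diagonal_mul_conj_diagonal hQ, ← Matrix.sub_mul,
    ← Matrix.mul_sub, diagonal_sub]
  simp_rw [phiMu_mul_self_sub hμ]
  exact conj_diagonal_const hQ μ

theorem conj_diagonal_phiMu_sub_hadamard_apply {μ : ℝ} (hμ : 0 < μ) {Q : Matrix n n ℝ}
    (hQ : Qᵀ * Q = 1) (d e : n → ℝ) {Ω : Matrix n n ℝ}
    (hΩ : ∀ i j, Ω i j = (phiMu μ (d i) + phiMu μ (d j))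
        / (√(d i ^ 2 + 4 * μ) + √(d j ^ 2 + 4 * μ))) (i j : n) :
    let F := Q * diagonal (fun i => phiMu μ (e i)) * Qᵀ - diagonal (fun i => phiMu μ (d i))
    let G := Q * diagonal e * Qᵀ - diagonal d
    (F - Ω ⊙ G) i j = (G * F + F * G - 2 • (F * F)) i j
        / (√(d i ^ 2 + 4 * μ) + √(d j ^ 2 + 4 * μ)) := by
  intro F G
  have hpos : 0 < √(d i ^ 2 + 4 * μ) + √(d j ^ 2 + 4 * μ) := by positivity
  have h := quadratic_perturbation_apply (fun i => phiMu_mul_self_sub hμ.le (d i)) (F := F) (G := G)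
    (by simpa [F, G] using conj_diagonal_phiMu_quadratic hμ.le hQ e)
    (by simpa [F, G] using commute_conj_diagonal hQ e _) i j
  rw [← sqrt_sq_add_eq_two_mul_phiMu_sub, ← sqrt_sq_add_eq_two_mul_phiMu_sub] at h
  rw [Matrix.sub_apply, hadamard_apply, hΩ, eq_div_iff hpos.ne']
  field_simp
  linear_combination h

theorem norm_conj_diagonal_phiMu_sub_hadamard_le {μ : ℝ} (hμ : 0 < μ) {Q : Matrix n n ℝ}
    (hQ : Qᵀ * Q = 1) (d e : n → ℝ) {Ω : Matrix n n ℝ}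
    (hΩ : ∀ i j, Ω i j = (phiMu μ (d i) + phiMu μ (d j))
        / (√(d i ^ 2 + 4 * μ) + √(d j ^ 2 + 4 * μ))) :
    ‖Q * diagonal (fun i => phiMu μ (e i)) * Qᵀ - diagonal (fun i => phiMu μ (d i))
        - Ω ⊙ (Q * diagonal e * Qᵀ - diagonal d)‖
      ≤ ‖Q * diagonal e * Qᵀ - diagonal d‖ ^ 2 / √μ := by
  set F := Q * diagonal (fun i => phiMu μ (e i)) * Qᵀ - diagonal (fun i => phiMu μ (d i))
  set G := Q * diagonal e * Qᵀ - diagonal d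
  have hs : ∀ i, 2 * √μ ≤ √(d i ^ 2 + 4 * μ) := fun i =>
    calc 2 * √μ = √(2 ^ 2 * μ) := by rw [Real.sqrt_mul (by positivity), Real.sqrt_sq two_pos.le]
      _ ≤ √(d i ^ 2 + 4 * μ) := Real.sqrt_le_sqrt (by nlinarith [sq_nonneg (d i)])
  have hF : ‖F‖ ≤ ‖G‖ := by
    simpa using (lipschitzWith_phiMu hμ.le).norm_conj_diagonal_sub_diagonal_le hQ e d
  have hN : ‖G * F + F * G - 2 • (F * F)‖ ≤ 4 * ‖G‖ ^ 2 := by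
    calc _ ≤ ‖G‖ * ‖F‖ + ‖F‖ * ‖G‖ + 2 * (‖F‖ * ‖F‖) := by
          refine (norm_sub_le _ _).trans (add_le_add ((norm_add_le _ _).trans
            (add_le_add (frobenius_norm_mul G F) (frobenius_norm_mul F G))) ?_)
          refine norm_nsmul_le.trans ?_
          push_cast
          gcongr
          exact frobenius_norm_mul F F
      _ ≤ 4 * ‖G‖ ^ 2 := by nlinarith [norm_nonneg F, norm_nonneg G]
  calc ‖F - Ω ⊙ G‖ ≤ ‖(4 * √μ)⁻¹ • (G * F + F * G - 2 • (F * F))‖ := by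
        refine frobenius_norm_le_of_forall_norm_le fun i j => ?_
        rw [conj_diagonal_phiMu_sub_hadamard_apply hμ hQ d e hΩ, Matrix.smul_apply, norm_smul,
          norm_div, norm_inv, Real.norm_of_nonneg (by positivity : 0 ≤ 4 * √μ), inv_mul_eq_div,
          Real.norm_of_nonneg (by positivity : 0 ≤ √(d i ^ 2 + 4 * μ) + √(d j ^ 2 + 4 * μ))]
        gcongr
        linarith [hs i, hs j]
    _ ≤ (4 * √μ)⁻¹ * (4 * ‖G‖ ^ 2) := by
        rw [norm_smul, Real.norm_of_nonneg (by positivity)]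
        gcongr
    _ = ‖G‖ ^ 2 / √μ := by field_simp

theorem norm_conj_diagonal_phiMu_sub_sub_hadamard_le {μ : ℝ} (hμ : 0 < μ) {P Q : Matrix n n ℝ}
    (hP : Pᵀ * P = 1) (hQ : Qᵀ * Q = 1) (d e : n → ℝ) {Ω : Matrix n n ℝ}
    (hΩ : ∀ i j, Ω i j = (phiMu μ (d i) + phiMu μ (d j))
        / (√(d i ^ 2 + 4 * μ) + √(d j ^ 2 + 4 * μ))) :
    ‖Q * diagonal (fun i => phiMu μ (e i)) * Qᵀ - P * diagonal (fun i => phiMu μ (d i)) * Pᵀ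
        - P * (Ω ⊙ (Pᵀ * (Q * diagonal e * Qᵀ - P * diagonal d * Pᵀ) * P)) * Pᵀ‖
      ≤ ‖Q * diagonal e * Qᵀ - P * diagonal d * Pᵀ‖ ^ 2 / √μ := by
  have hPt : Pᵀᵀ * Pᵀ = 1 := by rw [transpose_transpose, mul_eq_one_comm.mp hP]
  have hR : (Pᵀ * Q)ᵀ * (Pᵀ * Q) = 1 := by
    rw [transpose_mul, transpose_transpose, Matrix.mul_assoc, ← Matrix.mul_assoc P,
      mul_eq_one_comm.mp hP, Matrix.one_mul, hQ]
  have hPPt : ∀ K, P * (Pᵀ * K) = K := fun K => by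
    rw [← Matrix.mul_assoc, mul_eq_one_comm.mp hP, Matrix.one_mul]
  set M := Q * diagonal (fun i => phiMu μ (e i)) * Qᵀ - P * diagonal (fun i => phiMu μ (d i)) * Pᵀ
  set H := Q * diagonal e * Qᵀ - P * diagonal d * Pᵀ
  have hrem : M - P * (Ω ⊙ (Pᵀ * H * P)) * Pᵀ = P * (Pᵀ * M * P - Ω ⊙ (Pᵀ * H * P)) * Pᵀ := by
    rw [Matrix.mul_sub P, Matrix.sub_mul _ _ Pᵀ]
    simp only [Matrix.mul_assoc, hPPt, mul_eq_one_comm.mp hP, Matrix.mul_one]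
  have hHnorm : ‖Pᵀ * H * P‖ = ‖H‖ := by
    simpa using frobenius_norm_conj_of_transpose_mul_self hPt H
  have hM : Pᵀ * M * P = Pᵀ * Q * diagonal (fun i => phiMu μ (e i)) * (Pᵀ * Q)ᵀ
      - diagonal (fun i => phiMu μ (d i)) :=
    transpose_mul_conj_diagonal_sub_conj_diagonal_mul hP _ _
  have hG : Pᵀ * H * P = Pᵀ * Q * diagonal e * (Pᵀ * Q)ᵀ - diagonal d :=
    transpose_mul_conj_diagonal_sub_conj_diagonal_mul hP _ _
  rw [hrem, frobenius_norm_conj_of_transpose_mul_self hP, ← hHnorm, hM, hG]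
  exact norm_conj_diagonal_phiMu_sub_hadamard_le hμ hR d e hΩ

theorem frob_eq_norm {n : ℕ} (M : Matrix (Fin n) (Fin n) ℝ) : frob M = ‖M‖ := by
  rw [frob, ← Real.sqrt_sq (norm_nonneg M), frobenius_norm_sq]
  simp_rw [Real.norm_eq_abs, sq_abs]

theorem phi_matrix_frechet_derivative_general (n : ℕ) (μ : ℝ) (hμ : 0 < μ)
    (Φ : Matrix (Fin n) (Fin n) ℝ → Matrix (Fin n) (Fin n) ℝ)
    (hΦ : ∀ (P : Matrix (Fin n) (Fin n) ℝ) (d : Fin n → ℝ), Pᵀ * P = 1 →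
      Φ (P * Matrix.diagonal d * Pᵀ) = P * Matrix.diagonal (fun i => phiMu μ (d i)) * Pᵀ)
    (X P : Matrix (Fin n) (Fin n) ℝ) (d : Fin n → ℝ) (hP : Pᵀ * P = 1)
    (hX : X = P * Matrix.diagonal d * Pᵀ)
    (Ω : Matrix (Fin n) (Fin n) ℝ)
    (hΩ : ∀ i j : Fin n, Ω i j = (phiMu μ (d i) + phiMu μ (d j))
        / (Real.sqrt ((d i) ^ 2 + 4 * μ) + Real.sqrt ((d j) ^ 2 + 4 * μ))) :
    ∀ ε : ℝ, 0 < ε → ∃ δ : ℝ, 0 < δ ∧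
      ∀ H : Matrix (Fin n) (Fin n) ℝ, H.IsSymm → H ≠ 0 → frob H < δ →
        frob (Φ (X + H) - Φ X - P * (Matrix.hadamard Ω (Pᵀ * H * P)) * Pᵀ) / frob H
          < ε := by
  intro ε hε
  refine ⟨√μ * ε, by positivity, fun H hH hH0 hHδ => ?_⟩
  have hXsymm : X.IsSymm := by
    simp [hX, IsSymm, transpose_mul, Matrix.mul_assoc]
  obtain ⟨Q, e, hQ, hXH⟩ := exists_orthogonal_diagonal_of_isSymm (hXsymm.add hH)
  have hH' : H = Q * diagonal e * Qᵀ - P * diagonal d * Pᵀ := by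
    rw [← hXH, ← hX, add_sub_cancel_left]
  have hHpos : 0 < ‖H‖ := norm_pos_iff.mpr hH0
  rw [frob_eq_norm] at hHδ
  rw [frob_eq_norm, frob_eq_norm, div_lt_iff₀ hHpos]
  calc _ ≤ ‖H‖ ^ 2 / √μ := by
        rw [hXH, hΦ Q e hQ, hX, hΦ P d hP, hH']
        exact norm_conj_diagonal_phiMu_sub_sub_hadamard_le hμ hP hQ d e hΩ
    _ < ε * ‖H‖ := by
        rw [div_lt_iff₀ (Real.sqrt_pos.mpr hμ)]
        nlinarith

/-- Fréchet differentiability of `φ_μ^+` on symmetric matrices.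
Let `Φ` satisfy the spectral property `Φ(P Diag(d) Pᵀ) = P Diag(φ_μ(d)) Pᵀ` for all
orthogonal `P` and all `d`.  Fix `X = P Diag(d) Pᵀ` with `P` orthogonal, and let
`Ω_{ij} = (φ_μ(d_i) + φ_μ(d_j))/(√(d_i² + 4μ) + √(d_j² + 4μ))`.  Then `Φ` is Fréchet
differentiable at `X` within the symmetric matrices, with derivative
`H ↦ P(Ω ∘ (PᵀHP))Pᵀ` (Hadamard product `∘`):
`‖Φ(X + H) − Φ(X) − P(Ω ∘ (PᵀHP))Pᵀ‖_F / ‖H‖_F → 0` as symmetric `H → 0`. -/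
theorem phi_matrix_frechet_derivative (n : ℕ) (hn : 1 ≤ n) (μ : ℝ) (hμ : 0 < μ)
    (Φ : Matrix (Fin n) (Fin n) ℝ → Matrix (Fin n) (Fin n) ℝ)
    (hΦ : ∀ (P : Matrix (Fin n) (Fin n) ℝ) (d : Fin n → ℝ), Pᵀ * P = 1 →
      Φ (P * Matrix.diagonal d * Pᵀ) = P * Matrix.diagonal (fun i => phiMu μ (d i)) * Pᵀ)
    (X P : Matrix (Fin n) (Fin n) ℝ) (d : Fin n → ℝ) (hP : Pᵀ * P = 1)
    (hX : X = P * Matrix.diagonal d * Pᵀ)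
    (Ω : Matrix (Fin n) (Fin n) ℝ)
    (hΩ : ∀ i j : Fin n, Ω i j = (phiMu μ (d i) + phiMu μ (d j))
        / (Real.sqrt ((d i) ^ 2 + 4 * μ) + Real.sqrt ((d j) ^ 2 + 4 * μ))) :
    ∀ ε : ℝ, 0 < ε → ∃ δ : ℝ, 0 < δ ∧
      ∀ H : Matrix (Fin n) (Fin n) ℝ, H.IsSymm → H ≠ 0 → frob H < δ →
        frob (Φ (X + H) - Φ X - P * (Matrix.hadamard Ω (Pᵀ * H * P)) * Pᵀ) / frob H
          < ε :=
  phi_matrix_frechet_derivative_general n μ hμ Φ hΦ X P d hP hX Ω hΩ
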